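/- arXiv:2310.17223 — 4 statements merged into one kernel-verified Lean document; each statement's English description precedes it below -/
import Mathlib

section
/- Under the stated assumptions, for every threshold b > 0 the hitting time τ_b has finite expectation: E[τ_b] < ∞. -/
/-!
Write `D j = {τ_b ≥ j}` and `c = min μ_* μ^*`. The event `{τ_b ≥ i - w}` is known at time
`i - w - 1`, so the delayed drift gives `c P(τ_b ≥ i) ≤ E[Y_i; τ_b ≥ i] + E[Y_i; i - w ≤ τ_b < i]`,
and the second moment bound makes the last term at most `√v P(i - w ≤ τ_b < i)`. Summing over
`w < i ≤ n`, each event `{τ_b = k}` is counted at most `w` times, so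
`c ∑ P(D i) ≤ E[S_{τ_b ∧ n}] + √v w`. On the other hand `S_{τ_b ∧ n} ≤ b + |Y_{τ_b}|`, and by
AM-GM `2λ E|Y_{τ_b}| ≤ v ∑ P(D i) + λ²`; with `λ = v / c` half of the left-hand side is absorbed,
so the partial sums of `∑ P(D i)`, which dominates `E[τ_b]`, are bounded uniformly in `n`.
-/

open MeasureTheory Filter Set
open scoped ENNReal

section HittingEvents

open Finset Function

variable {Ω : Type*} (S : ℕ → Ω → ℝ) (w : ℕ) (b : ℝ)

noncomputable def delayedHittingTime (ω : Ω) : ℝ≥0∞ :=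
  sInf {t : ℝ≥0∞ | ∃ n : ℕ, t = n ∧ w < n ∧ b ≤ S n ω}

/-- The event `{τ_b ≥ j}`. -/
def notHitBefore (j : ℕ) : Set Ω := {ω | ∀ k, w < k → k < j → S k ω < b}

def hitAt (k : ℕ) : Set Ω := notHitBefore S w b k \ notHitBefore S w b (k + 1)

variable {S w b}

theorem notHitBefore_antitone : Antitone (notHitBefore S w b) :=
  fun _ _ hij _ hω k hwk hkj => hω k hwk (hkj.trans_le hij)

theorem pairwise_disjoint_hitAt : Pairwise (Disjoint on hitAt S w b) :=
  (pairwise_disjoint_on _).2 fun _ _ hkl =>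
    disjoint_left.2 fun _ hk hl => hk.2 (notHitBefore_antitone hkl hl.1)

theorem measurableSet_notHitBefore {m : MeasurableSpace Ω} {j : ℕ}
    (hSm : ∀ k < j, Measurable[m] (S k)) : MeasurableSet[m] (notHitBefore S w b j) := by
  have : notHitBefore S w b j = ⋂ k ∈ Finset.Ioo w j, S k ⁻¹' Iio b := by
    ext; simp [notHitBefore]
  rw [this]
  exact measurableSet_biInter _ fun k hk => hSm k (Finset.mem_Ioo.1 hk).2 measurableSet_Iio

theorem measurableSet_hitAt {m : MeasurableSpace Ω} {k : ℕ}
    (hSm : ∀ j ≤ k, Measurable[m] (S j)) : MeasurableSet[m] (hitAt S w b k) :=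
  (measurableSet_notHitBefore fun j hj => hSm j (by omega)).diff
    (measurableSet_notHitBefore fun j hj => hSm j (by omega))

variable {Y : ℕ → Ω → ℝ}

theorem sum_indicator_notHitBefore_of_mem (hS : ∀ n ω, S n ω = ∑ i ∈ Finset.Ioc w n, Y i ω) {n : ℕ}
    {ω : Ω} (hω : ω ∈ notHitBefore S w b (n + 1)) :
    ∑ i ∈ Finset.Ioc w n, (notHitBefore S w b i).indicator (Y i) ω = S n ω := by
  rw [hS]
  exact sum_congr rfl fun i hi =>
    indicator_of_mem (notHitBefore_antitone (by simp at hi; omega) hω) _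

theorem le_of_mem_notHitBefore (hS : ∀ n ω, S n ω = ∑ i ∈ Finset.Ioc w n, Y i ω) (hb : 0 ≤ b)
    {n : ℕ} {ω : Ω} (hω : ω ∈ notHitBefore S w b (n + 1)) : S n ω ≤ b := by
  rcases le_or_gt n w with hn | hn
  · rwa [hS, Finset.Ioc_eq_empty_of_le hn, sum_empty]
  · exact (hω n hn n.lt_succ_self).le

/-- Pathwise, `S_{τ_b ∧ n} ≤ b + |Y_{τ_b}| 1{τ_b ≤ n}`. -/
theorem sum_indicator_notHitBefore_le (hS : ∀ n ω, S n ω = ∑ i ∈ Finset.Ioc w n, Y i ω) (hb : 0 ≤ b)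
    (ω : Ω) (n : ℕ) :
    ∑ i ∈ Finset.Ioc w n, (notHitBefore S w b i).indicator (Y i) ω ≤
      b + ∑ k ∈ Finset.Ioc w n, (hitAt S w b k).indicator (fun ω => |Y k ω|) ω := by
  induction n with
  | zero => simpa using hb
  | succ n ih =>
    rcases lt_or_ge n w with hn | hn
    · rw [Finset.Ioc_eq_empty_of_le (by omega)]
      simpa using hb
    have hR : 0 ≤ ∑ k ∈ Finset.Ioc w n, (hitAt S w b k).indicator (fun ω => |Y k ω|) ω :=
      sum_nonneg fun k _ => indicator_nonneg (fun _ _ => abs_nonneg _) _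
    rw [sum_Ioc_succ_top hn, sum_Ioc_succ_top hn]
    by_cases hD : ω ∈ notHitBefore S w b (n + 1)
    · have hSn := le_of_mem_notHitBefore hS hb hD
      have hsucc : S (n + 1) ω = S n ω + Y (n + 1) ω := by rw [hS, hS, sum_Ioc_succ_top hn]
      rw [sum_indicator_notHitBefore_of_mem hS hD, indicator_of_mem hD]
      by_cases hD' : ω ∈ notHitBefore S w b (n + 1 + 1)
      · have hlt : S (n + 1) ω < b := hD' (n + 1) (by omega) (by omega)
        have hE : 0 ≤ (hitAt S w b (n + 1)).indicator (fun ω => |Y (n + 1) ω|) ω :=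
          indicator_nonneg (fun _ _ => abs_nonneg _) _
        linarith
      · rw [indicator_of_mem (show ω ∈ hitAt S w b (n + 1) from ⟨hD, hD'⟩)]
        linarith [le_abs_self (Y (n + 1) ω)]
    · rw [indicator_of_notMem hD, indicator_of_notMem fun h => hD h.1]
      simpa using ih

theorem delayedHittingTime_le_tsum_indicator (ω : Ω) :
    delayedHittingTime S w b ω ≤ ∑' j, (notHitBefore S w b j).indicator 1 ω := by
  classical
  by_cases hall : ∀ j, ω ∈ notHitBefore S w b j
  · simp [indicator_of_mem (hall _)]
  push Not at hall
  obtain ⟨k, hwk, hkj, hbk⟩ : ∃ k, w < k ∧ k < Nat.find hall ∧ b ≤ S k ω := by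
    simpa [notHitBefore] using Nat.find_spec hall
  calc delayedHittingTime S w b ω ≤ k := sInf_le ⟨k, rfl, hwk, hbk⟩
    _ ≤ Nat.find hall := by exact_mod_cast hkj.le
    _ = ∑ j ∈ Finset.range (Nat.find hall), (notHitBefore S w b j).indicator 1 ω := by
      rw [sum_congr rfl fun j hj =>
        indicator_of_mem (of_not_not (Nat.find_min hall (Finset.mem_range.1 hj))) _]
      simp
    _ ≤ ∑' j, (notHitBefore S w b j).indicator 1 ω := ENNReal.sum_le_tsum _

theorem lintegral_delayedHittingTime_le {m0 : MeasurableSpace Ω} (P : Measure Ω)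
    (hSm : ∀ n, Measurable (S n)) :
    ∫⁻ ω, delayedHittingTime S w b ω ∂P ≤ ∑' j, P (notHitBefore S w b j) :=
  calc ∫⁻ ω, delayedHittingTime S w b ω ∂P
      ≤ ∫⁻ ω, ∑' j, (notHitBefore S w b j).indicator 1 ω ∂P :=
        lintegral_mono delayedHittingTime_le_tsum_indicator
    _ = ∑' j, P (notHitBefore S w b j) := by
        rw [lintegral_tsum fun j =>
          (measurable_one.indicator (measurableSet_notHitBefore fun k _ => hSm k)).aemeasurable]
        simp_rw [lintegral_indicator_one (measurableSet_notHitBefore fun k _ => hSm k)]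

end HittingEvents

section SetIntegralBounds

variable {Ω : Type*} {m m0 : MeasurableSpace Ω} {μ : Measure Ω} [IsFiniteMeasure μ]
  {f : Ω → ℝ} {c : ℝ} {s : Set Ω}

theorem mul_measureReal_le_setIntegral_of_le_condExp (hm : m ≤ m0) (hf : Integrable f μ)
    (hc : (fun _ => c) ≤ᵐ[μ] μ[f|m]) (hs : MeasurableSet[m] s) :
    c * μ.real s ≤ ∫ x in s, f x ∂μ :=
  calc c * μ.real s = ∫ _ in s, c ∂μ := by rw [setIntegral_const, smul_eq_mul, mul_comm]
    _ ≤ ∫ x in s, (μ[f|m]) x ∂μ :=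
      setIntegral_mono_ae (integrable_const c).integrableOn integrable_condExp.integrableOn hc
    _ = ∫ x in s, f x ∂μ := setIntegral_condExp hm hf hs

theorem setIntegral_le_mul_measureReal_of_condExp_le (hm : m ≤ m0) (hf : Integrable f μ)
    (hc : μ[f|m] ≤ᵐ[μ] fun _ => c) (hs : MeasurableSet[m] s) :
    ∫ x in s, f x ∂μ ≤ c * μ.real s :=
  calc ∫ x in s, f x ∂μ = ∫ x in s, (μ[f|m]) x ∂μ := (setIntegral_condExp hm hf hs).symm
    _ ≤ ∫ _ in s, c ∂μ :=
      setIntegral_mono_ae integrable_condExp.integrableOn (integrable_const c).integrableOn hc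
    _ = c * μ.real s := by rw [setIntegral_const, smul_eq_mul, mul_comm]

theorem two_mul_mul_setIntegral_abs_le (hf : MemLp f 2 μ) (l : ℝ) (s : Set Ω) :
    2 * l * ∫ x in s, |f x| ∂μ ≤ ∫ x in s, f x ^ 2 ∂μ + l ^ 2 * μ.real s :=
  calc 2 * l * ∫ x in s, |f x| ∂μ = ∫ x in s, 2 * l * |f x| ∂μ := (integral_const_mul _ _).symm
    _ ≤ ∫ x in s, (f x ^ 2 + l ^ 2) ∂μ :=
      setIntegral_mono ((hf.integrable one_le_two).abs.const_mul _).integrableOn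
        (hf.integrable_sq.add (integrable_const _)).integrableOn fun x => by
          nlinarith [two_mul_le_add_sq l |f x|, sq_abs (f x)]
    _ = ∫ x in s, f x ^ 2 ∂μ + l ^ 2 * μ.real s := by
      rw [integral_add hf.integrable_sq.integrableOn (integrable_const _).integrableOn,
        setIntegral_const, smul_eq_mul, mul_comm]

theorem abs_setIntegral_le_sqrt_mul_of_condExp_sq_le {v : ℝ} (hv : 0 < v) (hm : m ≤ m0)
    (hf : MemLp f 2 μ) (hvar : μ[fun x => f x ^ 2|m] ≤ᵐ[μ] fun _ => v)
    (hs : MeasurableSet[m] s) :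
    |∫ x in s, f x ∂μ| ≤ √v * μ.real s := by
  have hsq := setIntegral_le_mul_measureReal_of_condExp_le hm hf.integrable_sq hvar hs
  have hamgm := two_mul_mul_setIntegral_abs_le hf (√v) s
  rw [Real.sq_sqrt hv.le] at hamgm
  refine abs_integral_le_integral_abs.trans
    (le_of_mul_le_mul_left ?_ (by positivity : 0 < 2 * √v))
  calc 2 * √v * ∫ x in s, |f x| ∂μ ≤ ∫ x in s, f x ^ 2 ∂μ + v * μ.real s := hamgm
    _ ≤ 2 * v * μ.real s := by linarith
    _ = 2 * √v * (√v * μ.real s) := by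
      linear_combination (-2 * μ.real s) * Real.mul_self_sqrt hv.le

end SetIntegralBounds

theorem sum_sum_Ico_sub_le_mul_sum {p : ℕ → ℝ} (hp : ∀ k, 0 ≤ p k) (w n : ℕ) :
    ∑ i ∈ Finset.Ioc w n, ∑ k ∈ Finset.Ico (i - w) i, p k ≤
      w * ∑ k ∈ Finset.range n, p k :=
  calc ∑ i ∈ Finset.Ioc w n, ∑ k ∈ Finset.Ico (i - w) i, p k
      = ∑ j ∈ Finset.range w, ∑ i ∈ Finset.Ioc w n, p (i - w + j) := by
        rw [Finset.sum_comm]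
        refine Finset.sum_congr rfl fun i hi => ?_
        rw [Finset.sum_Ico_eq_sum_range, Nat.sub_sub_self (Finset.mem_Ioc.1 hi).1.le]
    _ ≤ ∑ j ∈ Finset.range w, ∑ k ∈ Finset.range n, p k := by
        refine Finset.sum_le_sum fun j hj => ?_
        rw [← Finset.sum_image fun a ha b hb h => by simp at ha hb h; omega]
        exact Finset.sum_le_sum_of_subset_of_nonneg
          (fun k hk => by simp at hk hj ⊢; omega) fun k _ _ => hp k
    _ = w * ∑ k ∈ Finset.range n, p k := by simp

theorem tsum_measure_lt_top_of_sum_measureReal_Ioc_le {Ω : Type*} {m0 : MeasurableSpace Ω}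
    {μ : Measure Ω} [IsFiniteMeasure μ] {A : ℕ → Set Ω} {C : ℝ} (w : ℕ)
    (h : ∀ n, ∑ i ∈ Finset.Ioc w n, μ.real (A i) ≤ C) :
    ∑' i, μ (A i) < ∞ := by
  have hC : ∀ n, ∑ i ∈ Finset.Ioc w n, μ (A i) ≤ ENNReal.ofReal C := fun n => by
    rw [← ENNReal.ofReal_toReal (ENNReal.sum_ne_top.2 fun i _ => measure_ne_top μ (A i)),
      ENNReal.toReal_sum fun i _ => measure_ne_top μ (A i)]
    exact ENNReal.ofReal_le_ofReal (h n)
  have hhead : ∑ i ∈ Finset.range (w + 1), μ (A i) < ∞ :=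
    (ENNReal.sum_ne_top.2 fun i _ => measure_ne_top μ (A i)).lt_top
  refine (ENNReal.tsum_le_of_sum_range_le fun n => ?_).trans_lt
    (ENNReal.add_lt_top.2 ⟨hhead, ENNReal.ofReal_lt_top (r := C)⟩)
  calc ∑ i ∈ Finset.range n, μ (A i)
      ≤ ∑ i ∈ Finset.range (w + 1) ∪ Finset.Ioc w n, μ (A i) :=
        Finset.sum_le_sum_of_subset fun i hi => by simp at hi ⊢; omega
    _ = ∑ i ∈ Finset.range (w + 1), μ (A i) + ∑ i ∈ Finset.Ioc w n, μ (A i) :=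
        Finset.sum_union (Finset.disjoint_left.2 fun i h₁ h₂ => by simp at h₁ h₂; omega)
    _ ≤ ∑ i ∈ Finset.range (w + 1), μ (A i) + ENNReal.ofReal C := by
        gcongr
        exact hC n

section DelayedDrift

open Finset

variable {Ω : Type*} {m0 : MeasurableSpace Ω} {P : Measure Ω} [IsProbabilityMeasure P]
  {𝒢 : Filtration ℕ m0} {Y S : ℕ → Ω → ℝ} {w : ℕ} {b c v : ℝ}

theorem adapted_of_eq_sum_Ioc (hY : ∀ i, w < i → StronglyMeasurable[𝒢 i] (Y i))
    (hS : ∀ n ω, S n ω = ∑ i ∈ Finset.Ioc w n, Y i ω) : Adapted 𝒢 S := fun n => by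
  rw [show S n = fun ω => ∑ i ∈ Finset.Ioc w n, Y i ω from funext (hS n)]
  exact Finset.measurable_sum _ fun i hi =>
    (hY i (Finset.mem_Ioc.1 hi).1).measurable.mono (𝒢.mono (Finset.mem_Ioc.1 hi).2) le_rfl

theorem sum_measureReal_hitAt_le_one (hSm : ∀ n, Measurable (S n)) (s : Finset ℕ) :
    ∑ k ∈ s, P.real (hitAt S w b k) ≤ 1 := by
  rw [← measureReal_biUnion_finset (pairwise_disjoint_hitAt.set_pairwise _)
    fun k _ => measurableSet_hitAt fun j _ => hSm j]
  exact measureReal_le_one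

theorem mul_measureReal_notHitBefore_le (hSad : Adapted 𝒢 S) (hc : 0 ≤ c) (hv : 0 < v) {i : ℕ}
    (hY : MemLp (Y i) 2 P) (hdrift : (fun _ => c) ≤ᵐ[P] P[Y i|𝒢 (i - w - 1)])
    (hvar : P[fun ω => Y i ω ^ 2|𝒢 (i - 1)] ≤ᵐ[P] fun _ => v) :
    c * P.real (notHitBefore S w b i) ≤
      ∫ ω in notHitBefore S w b i, Y i ω ∂P +
        √v * ∑ k ∈ Finset.Ico (i - w) i, P.real (hitAt S w b k) := by
  set D := notHitBefore S w b
  have hDm : ∀ j, MeasurableSet (D j) := fun j =>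
    measurableSet_notHitBefore fun k _ => hSad.measurable
  -- `D (i - w) = {τ_b ≥ i - w}` is `𝒢 (i - w - 1)`-measurable, so the delayed drift applies to it
  have hdelayed : c * P.real (D (i - w)) ≤ ∫ ω in D (i - w), Y i ω ∂P :=
    mul_measureReal_le_setIntegral_of_le_condExp (𝒢.le _) (hY.integrable one_le_two) hdrift
      (measurableSet_notHitBefore fun k hk => (hSad k).mono (𝒢.mono (by omega)) le_rfl)
  have htelescope : ∫ ω in D (i - w), Y i ω ∂P =
      ∫ ω in D i, Y i ω ∂P + ∑ k ∈ Finset.Ico (i - w) i, ∫ ω in hitAt S w b k, Y i ω ∂P := by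
    have hstep : ∀ k, ∫ ω in hitAt S w b k, Y i ω ∂P =
        ∫ ω in D k, Y i ω ∂P - ∫ ω in D (k + 1), Y i ω ∂P := fun k =>
      setIntegral_sdiff (hDm (k + 1)) (hY.integrable one_le_two).integrableOn
        (notHitBefore_antitone k.le_succ)
    have := Finset.sum_Ico_sub (fun k => -∫ ω in D k, Y i ω ∂P) (Nat.sub_le i w)
    rw [Finset.sum_congr rfl fun k _ => hstep k]
    simp only [sub_neg_eq_add, neg_add_eq_sub] at this
    linarith
  have herror : ∀ k ∈ Finset.Ico (i - w) i,
      ∫ ω in hitAt S w b k, Y i ω ∂P ≤ √v * P.real (hitAt S w b k) := fun k hk =>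
    (le_abs_self _).trans <| abs_setIntegral_le_sqrt_mul_of_condExp_sq_le hv (𝒢.le _) hY hvar <|
      measurableSet_hitAt fun j hj =>
        (hSad j).mono (𝒢.mono (by simp at hk; omega)) le_rfl
  calc c * P.real (D i) ≤ c * P.real (D (i - w)) :=
        mul_le_mul_of_nonneg_left (measureReal_mono (notHitBefore_antitone (Nat.sub_le i w))) hc
    _ ≤ ∫ ω in D i, Y i ω ∂P + ∑ k ∈ Finset.Ico (i - w) i, ∫ ω in hitAt S w b k, Y i ω ∂P :=
        htelescope ▸ hdelayed
    _ ≤ ∫ ω in D i, Y i ω ∂P + √v * ∑ k ∈ Finset.Ico (i - w) i, P.real (hitAt S w b k) := by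
        rw [mul_sum]
        gcongr with k hk
        exact herror k hk

theorem sum_setIntegral_notHitBefore_le (hS : ∀ n ω, S n ω = ∑ i ∈ Finset.Ioc w n, Y i ω)
    (hSm : ∀ n, Measurable (S n)) (hb : 0 ≤ b) {n : ℕ}
    (hY : ∀ i ∈ Finset.Ioc w n, Integrable (Y i) P) :
    ∑ i ∈ Finset.Ioc w n, ∫ ω in notHitBefore S w b i, Y i ω ∂P ≤
      b + ∑ k ∈ Finset.Ioc w n, ∫ ω in hitAt S w b k, |Y k ω| ∂P := by
  have hDm : ∀ j, MeasurableSet (notHitBefore S w b j) := fun j =>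
    measurableSet_notHitBefore fun k _ => hSm k
  have hEm : ∀ k, MeasurableSet (hitAt S w b k) := fun k =>
    measurableSet_hitAt fun j _ => hSm j
  have hDint : ∀ i ∈ Finset.Ioc w n, Integrable ((notHitBefore S w b i).indicator (Y i)) P :=
    fun i hi => (hY i hi).indicator (hDm i)
  have hEint : ∀ k ∈ Finset.Ioc w n,
      Integrable ((hitAt S w b k).indicator fun ω => |Y k ω|) P :=
    fun k hk => (hY k hk).abs.indicator (hEm k)
  simp_rw [← integral_indicator (hDm _), ← integral_indicator (hEm _)]
  rw [← integral_finsetSum _ hDint, ← integral_finsetSum _ hEint]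
  calc ∫ ω, ∑ i ∈ Finset.Ioc w n, (notHitBefore S w b i).indicator (Y i) ω ∂P
      ≤ ∫ ω, (b + ∑ k ∈ Finset.Ioc w n, (hitAt S w b k).indicator (fun ω => |Y k ω|) ω) ∂P :=
        integral_mono (integrable_finsetSum _ hDint)
          ((integrable_const b).add (integrable_finsetSum _ hEint))
          fun ω => sum_indicator_notHitBefore_le hS hb ω n
    _ = b + ∫ ω, ∑ k ∈ Finset.Ioc w n, (hitAt S w b k).indicator (fun ω => |Y k ω|) ω ∂P := by
        rw [integral_add (integrable_const b) (integrable_finsetSum _ hEint), integral_const]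
        simp

theorem two_mul_setIntegral_abs_hitAt_le (hSad : Adapted 𝒢 S) {k : ℕ} (hY : MemLp (Y k) 2 P)
    (hvar : P[fun ω => Y k ω ^ 2|𝒢 (k - 1)] ≤ᵐ[P] fun _ => v) (l : ℝ) :
    2 * l * ∫ ω in hitAt S w b k, |Y k ω| ∂P ≤
      v * P.real (notHitBefore S w b k) + l ^ 2 * P.real (hitAt S w b k) :=
  calc 2 * l * ∫ ω in hitAt S w b k, |Y k ω| ∂P
      ≤ ∫ ω in hitAt S w b k, Y k ω ^ 2 ∂P + l ^ 2 * P.real (hitAt S w b k) :=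
        two_mul_mul_setIntegral_abs_le hY l _
    _ ≤ ∫ ω in notHitBefore S w b k, Y k ω ^ 2 ∂P + l ^ 2 * P.real (hitAt S w b k) := by
        gcongr ?_ + _
        exact setIntegral_mono_set hY.integrable_sq.integrableOn
          (ae_of_all _ fun _ => sq_nonneg _) sdiff_subset.eventuallyLE
    _ ≤ v * P.real (notHitBefore S w b k) + l ^ 2 * P.real (hitAt S w b k) := by
        gcongr ?_ + _
        exact setIntegral_le_mul_measureReal_of_condExp_le (𝒢.le _) hY.integrable_sq hvar
          (measurableSet_notHitBefore fun j hj => (hSad j).mono (𝒢.mono (by omega)) le_rfl)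

theorem two_mul_sum_setIntegral_notHitBefore_le (hSad : Adapted 𝒢 S)
    (hS : ∀ n ω, S n ω = ∑ i ∈ Finset.Ioc w n, Y i ω) (hb : 0 ≤ b) {l : ℝ} (hl : 0 ≤ l)
    (hY : ∀ i, w < i → MemLp (Y i) 2 P)
    (hvar : ∀ i, w < i → P[fun ω => Y i ω ^ 2|𝒢 (i - 1)] ≤ᵐ[P] fun _ => v) (n : ℕ) :
    2 * l * ∑ i ∈ Finset.Ioc w n, ∫ ω in notHitBefore S w b i, Y i ω ∂P ≤
      2 * l * b + v * ∑ i ∈ Finset.Ioc w n, P.real (notHitBefore S w b i) + l ^ 2 := by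
  set D := notHitBefore S w b
  set E := hitAt S w b
  have hE : l ^ 2 * ∑ k ∈ Finset.Ioc w n, P.real (E k) ≤ l ^ 2 * 1 :=
    mul_le_mul_of_nonneg_left (sum_measureReal_hitAt_le_one (fun _ => hSad.measurable) _)
      (sq_nonneg l)
  calc 2 * l * ∑ i ∈ Finset.Ioc w n, ∫ ω in D i, Y i ω ∂P
      ≤ 2 * l * (b + ∑ k ∈ Finset.Ioc w n, ∫ ω in E k, |Y k ω| ∂P) := by
        gcongr
        exact sum_setIntegral_notHitBefore_le hS (fun _ => hSad.measurable) hb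
          fun i hi => (hY i (Finset.mem_Ioc.1 hi).1).integrable one_le_two
    _ = 2 * l * b + ∑ k ∈ Finset.Ioc w n, 2 * l * ∫ ω in E k, |Y k ω| ∂P := by
        rw [mul_add, mul_sum]
    _ ≤ 2 * l * b + ∑ k ∈ Finset.Ioc w n, (v * P.real (D k) + l ^ 2 * P.real (E k)) := by
        gcongr with k hk
        have hwk := (Finset.mem_Ioc.1 hk).1
        exact two_mul_setIntegral_abs_hitAt_le hSad (hY k hwk) (hvar k hwk) l
    _ ≤ 2 * l * b + v * ∑ i ∈ Finset.Ioc w n, P.real (D i) + l ^ 2 := by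
        rw [sum_add_distrib, ← mul_sum, ← mul_sum]
        linarith

theorem sum_measureReal_notHitBefore_le (hSad : Adapted 𝒢 S)
    (hS : ∀ n ω, S n ω = ∑ i ∈ Finset.Ioc w n, Y i ω) (hb : 0 ≤ b) (hc : 0 < c) (hv : 0 < v)
    (hY : ∀ i, w < i → MemLp (Y i) 2 P)
    (hdrift : ∀ i, w < i → (fun _ => c) ≤ᵐ[P] P[Y i|𝒢 (i - w - 1)])
    (hvar : ∀ i, w < i → P[fun ω => Y i ω ^ 2|𝒢 (i - 1)] ≤ᵐ[P] fun _ => v) (n : ℕ) :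
    ∑ i ∈ Finset.Ioc w n, P.real (notHitBefore S w b i) ≤ (2 * b + 2 * √v * w + v / c) / c := by
  set D := notHitBefore S w b
  set X := ∑ i ∈ Finset.Ioc w n, P.real (D i)
  set I := ∑ i ∈ Finset.Ioc w n, ∫ ω in D i, Y i ω ∂P
  have hwindow : ∑ i ∈ Finset.Ioc w n, ∑ k ∈ Finset.Ico (i - w) i, P.real (hitAt S w b k) ≤ w :=
    (sum_sum_Ico_sub_le_mul_sum (fun k => measureReal_nonneg) w n).trans
      (mul_le_of_le_one_right (Nat.cast_nonneg w)
        (sum_measureReal_hitAt_le_one (fun k => hSad.measurable) _))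
  have hlower : c * X ≤ I + √v * w :=
    calc c * X = ∑ i ∈ Finset.Ioc w n, c * P.real (D i) := mul_sum _ _ _
      _ ≤ ∑ i ∈ Finset.Ioc w n, (∫ ω in D i, Y i ω ∂P +
            √v * ∑ k ∈ Finset.Ico (i - w) i, P.real (hitAt S w b k)) :=
          sum_le_sum fun i hi =>
            have hwi := (Finset.mem_Ioc.1 hi).1
            mul_measureReal_notHitBefore_le hSad hc.le hv (hY i hwi) (hdrift i hwi)
              (hvar i hwi)
      _ ≤ I + √v * w := by
          rw [sum_add_distrib, ← mul_sum]
          gcongr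
  -- `λ = v / c` is chosen so that `λ c = v`: the overshoot term then absorbs half of `c X`
  have hupper := two_mul_sum_setIntegral_notHitBefore_le hSad hS hb (l := v / c)
    (div_nonneg hv.le hc.le) hY hvar n
  have hlc : v / c * c = v := div_mul_cancel₀ v hc.ne'
  have h2 := mul_le_mul_of_nonneg_left hlower (by positivity : 0 ≤ 2 * (v / c))
  rw [le_div_iff₀ hc]
  refine le_of_mul_le_mul_left ?_ (by positivity : 0 < v / c)
  linear_combination h2 + hupper - X * hlc

end DelayedDrift

theorem finite_expectation_of_hitting_time_general
    {Ω : Type*} [m0 : MeasurableSpace Ω] (P : Measure Ω) [IsProbabilityMeasure P]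
    (𝒢 : Filtration ℕ m0)
    (Y : ℕ → Ω → ℝ)
    (hY2 : ∀ n, 1 ≤ n → MemLp (Y n) 2 P)
    (hadp : ∀ n, 1 ≤ n → StronglyMeasurable[𝒢 n] (Y n))
    (w : ℕ)
    (N : Set ℕ)
    (μstar μlow v : ℝ)
    (hμstar : 0 < μstar) (hμlow : 0 < μlow) (hv : 0 < v)
    (haOut : ∀ n, w < n → n ∉ N →
      (fun _ => μstar) ≤ᵐ[P] P[Y n | 𝒢 (n - w - 1)])
    (haIn : ∀ n, w < n → n ∈ N →
      (fun _ => μlow) ≤ᵐ[P] P[Y n | 𝒢 (n - w - 1)])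
    (hvar : ∀ n, w < n → P[(fun ω => (Y n ω) ^ 2) | 𝒢 (n - 1)] ≤ᵐ[P] (fun _ => v))
    (S : ℕ → Ω → ℝ) (hS : ∀ n ω, S n ω = ∑ i ∈ Finset.Ioc w n, Y i ω)
    (b : ℝ) (hb : 0 < b)
    (τ : Ω → ℝ≥0∞)
    (hτ : ∀ ω, τ ω = sInf {t : ℝ≥0∞ | ∃ n : ℕ, t = n ∧ w < n ∧ b ≤ S n ω}) :
    ∫⁻ ω, τ ω ∂P < ∞ := by
  have hdrift : ∀ i, w < i → (fun _ => min μstar μlow) ≤ᵐ[P] P[Y i | 𝒢 (i - w - 1)] :=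
    fun i hi => by
      by_cases hiN : i ∈ N
      · exact (haIn i hi hiN).mono fun _ h => (min_le_right _ _).trans h
      · exact (haOut i hi hiN).mono fun _ h => (min_le_left _ _).trans h
  have hSad : Adapted 𝒢 S := adapted_of_eq_sum_Ioc (fun i _ => hadp i (by omega)) hS
  rw [show τ = delayedHittingTime S w b from funext hτ]
  exact (lintegral_delayedHittingTime_le P fun _ => hSad.measurable).trans_lt
    (tsum_measure_lt_top_of_sum_measureReal_Ioc_le w
      (sum_measureReal_notHitBefore_le hSad hS hb.le (lt_min hμstar hμlow) hv
        (fun i _ => hY2 i (by omega)) hdrift hvar))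

/-- Proposition 1(i): under the drift, boundedness and sampling assumptions, the hitting
time `τ_b = inf {n > w : S_n ≥ b}` of the delayed partial-sum process has finite
expectation, `E[τ_b] < ∞`. -/
theorem finite_expectation_of_hitting_time
    {Ω : Type*} [m0 : MeasurableSpace Ω] (P : Measure Ω) [IsProbabilityMeasure P]
    (𝒢 : Filtration ℕ m0) (h𝒢0 : 𝒢 0 = ⊥)
    (Y : ℕ → Ω → ℝ)
    (hY2 : ∀ n, 1 ≤ n → MemLp (Y n) 2 P)
    (hadp : ∀ n, 1 ≤ n → StronglyMeasurable[𝒢 n] (Y n))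
    (w q : ℕ) (hq : 0 < q) (hqw : q < w)
    (N : Set ℕ) (hN : ∀ m ∈ N, w < m)
    (μstar μlow μ v : ℝ)
    (hμstar : 0 < μstar) (hμlow : 0 < μlow) (hμ : 0 < μ) (hv : 0 < v)
    (haOut : ∀ n, w < n → n ∉ N →
      (fun _ => μstar) ≤ᵐ[P] P[Y n | 𝒢 (n - w - 1)])
    (haIn : ∀ n, w < n → n ∈ N →
      (fun _ => μlow) ≤ᵐ[P] P[Y n | 𝒢 (n - w - 1)])
    (hbnd : ∀ n, w < n → P[Y n | 𝒢 (n - 1)] ≤ᵐ[P] (fun _ => μ))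
    (hvar : ∀ n, w < n → P[(fun ω => (Y n ω) ^ 2) | 𝒢 (n - 1)] ≤ᵐ[P] (fun _ => v))
    (hd : ∀ (n : ℕ) (s : Finset ℕ),
      (∀ m ∈ s, m ∈ N ∧ m ∈ Finset.Ioc w (w + n)) → (s.card : ℝ) ≤ n * q / w)
    (S : ℕ → Ω → ℝ) (hS : ∀ n ω, S n ω = ∑ i ∈ Finset.Ioc w n, Y i ω)
    (b : ℝ) (hb : 0 < b)
    (τ : Ω → ℝ≥0∞)
    (hτ : ∀ ω, τ ω = sInf {t : ℝ≥0∞ | ∃ n : ℕ, t = n ∧ w < n ∧ b ≤ S n ω}) :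
    ∫⁻ ω, τ ω ∂P < ∞ :=
  finite_expectation_of_hitting_time_general (m0 := m0) P 𝒢 Y hY2 hadp w N μstar μlow v hμstar hμlow
    hv haOut haIn hvar S hS b hb τ hτ
end

section
/- For every b > 0, the stopping time T_b = inf{n > w : M_n ≥ e^b} satisfies E[T_b] ≥ e^b (with E[T_b] = ∞ allowed). -/
/-!
Dominate the CuSum statistic by the Shiryaev–Roberts statistic `R_w = 0`,
`R_n = (R_{n-1} + 1) L_n`: inductively `max(M_n, 1) ≤ R_n + 1`.
Since `E[L_n | F_{n-1}] = 1`, `R_n - (n - w)` is a martingale, so optional stopping at `T ∧ N`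
gives `e^b P(T ≤ N) ≤ E[R_{T ∧ N}] = E[T ∧ N - w] ≤ E[T]`. Letting `N → ∞` yields `e^b ≤ E[T]`
unless `P(T = ∞) > 0`, in which case `E[T] = ∞`. Everything is phrased with lower Lebesgue
integrals, so that no integrability of `R_n` is needed.
-/

open MeasureTheory Set
open scoped ENNReal

section

variable {Ω : Type*} {m0 : MeasurableSpace Ω} {P : Measure Ω}

theorem withDensity_trim_eq_of_condExp_eq_one [IsFiniteMeasure P] {m : MeasurableSpace Ω}
    (hm : m ≤ m0) {g : Ω → ℝ} (hg0 : 0 ≤ᵐ[P] g) (hgi : Integrable g P)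
    (hgc : P[g | m] =ᵐ[P] fun _ => 1) :
    (P.withDensity fun ω => ENNReal.ofReal (g ω)).trim hm = P.trim hm := by
  ext s hs
  rw [trim_measurableSet_eq hm hs, trim_measurableSet_eq hm hs, withDensity_apply _ (hm s hs),
    ← ofReal_integral_eq_lintegral_ofReal hgi.integrableOn (ae_restrict_of_ae hg0),
    ← setIntegral_condExp hm hgi hs, setIntegral_congr_ae (hm s hs) (hgc.mono fun _ h _ => h),
    setIntegral_const, smul_eq_mul, mul_one, ofReal_measureReal]

theorem lintegral_mul_ofReal_eq_of_condExp_eq_one [IsFiniteMeasure P] {m : MeasurableSpace Ω}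
    (hm : m ≤ m0) {g : Ω → ℝ} (hg0 : 0 ≤ᵐ[P] g) (hgi : Integrable g P)
    (hgc : P[g | m] =ᵐ[P] fun _ => 1) {f : Ω → ℝ≥0∞} (hf : Measurable[m] f) :
    ∫⁻ ω, f ω * ENNReal.ofReal (g ω) ∂P = ∫⁻ ω, f ω ∂P := by
  calc ∫⁻ ω, f ω * ENNReal.ofReal (g ω) ∂P
      = ∫⁻ ω, f ω ∂(P.withDensity fun ω => ENNReal.ofReal (g ω)) := by
        rw [lintegral_withDensity_eq_lintegral_mul₀ hgi.aemeasurable.ennreal_ofReal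
          (hf.mono hm le_rfl).aemeasurable]
        simp only [Pi.mul_apply, mul_comm]
    _ = ∫⁻ ω, f ω ∂P := by
        rw [← lintegral_trim hm hf, withDensity_trim_eq_of_condExp_eq_one hm hg0 hgi hgc,
          lintegral_trim hm hf]

/-- Optional stopping for `R_j - j` stopped when leaving `G`, in subtraction-free form:
`E[R_{τ ∧ N}] = E[τ ∧ N]` for `τ = inf {j | ω ∉ G j}`, and `R_τ ≥ B` on `{τ ≤ N}`. -/
theorem setLIntegral_add_mul_measure_compl_le_sum {R : ℕ → Ω → ℝ≥0∞} {G : ℕ → Set Ω}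
    {B : ℝ≥0∞} (hG : Antitone G) (hGm : ∀ j, MeasurableSet (G j)) (hG0 : G 0 = univ)
    (hR0 : R 0 = 0)
    (hstep : ∀ j, ∫⁻ ω in G j, R (j + 1) ω ∂P = ∫⁻ ω in G j, R j ω ∂P + P (G j))
    (hB : ∀ j, ∀ ω ∈ G j \ G (j + 1), B ≤ R (j + 1) ω) (N : ℕ) :
    ∫⁻ ω in G N, R N ω ∂P + B * P (G N)ᶜ ≤ ∑ j ∈ Finset.range N, P (G j) := by
  induction N with
  | zero => simp [hG0, hR0]
  | succ N ih =>
    have hsub : G (N + 1) ⊆ G N := hG N.le_succ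
    have hdiff : MeasurableSet (G N \ G (N + 1)) := (hGm N).diff (hGm (N + 1))
    have hint : ∫⁻ ω in G N, R (N + 1) ω ∂P
        = ∫⁻ ω in G (N + 1), R (N + 1) ω ∂P + ∫⁻ ω in G N \ G (N + 1), R (N + 1) ω ∂P := by
      rw [← lintegral_inter_add_sdiff _ _ (hGm (N + 1)), inter_eq_right.2 hsub]
    have hcompl : P (G (N + 1))ᶜ = P (G N)ᶜ + P (G N \ G (N + 1)) := by
      rw [← measure_union (disjoint_compl_left.mono_right sdiff_subset) hdiff]
      congr 1
      ext ω
      have := @hsub ω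
      simp only [mem_union, mem_compl_iff, Set.mem_sdiff]
      tauto
    have halarm : B * P (G N \ G (N + 1)) ≤ ∫⁻ ω in G N \ G (N + 1), R (N + 1) ω ∂P := by
      rw [← setLIntegral_const]
      exact setLIntegral_mono' hdiff (hB N)
    calc ∫⁻ ω in G (N + 1), R (N + 1) ω ∂P + B * P (G (N + 1))ᶜ
        = ∫⁻ ω in G (N + 1), R (N + 1) ω ∂P + B * P (G N \ G (N + 1)) + B * P (G N)ᶜ := by
          rw [hcompl, mul_add]; ring
      _ ≤ ∫⁻ ω in G N, R (N + 1) ω ∂P + B * P (G N)ᶜ := by rw [hint]; gcongr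
      _ = ∫⁻ ω in G N, R N ω ∂P + B * P (G N)ᶜ + P (G N) := by rw [hstep]; ring
      _ ≤ ∑ j ∈ Finset.range (N + 1), P (G j) := by rw [Finset.sum_range_succ]; gcongr

theorem sum_measure_le_lintegral {G : ℕ → Set Ω} (hGm : ∀ j, MeasurableSet (G j))
    {T : Ω → ℝ≥0∞} (hT : ∀ j, ∀ ω ∈ G j, (j + 1 : ℝ≥0∞) ≤ T ω) (N : ℕ) :
    ∑ j ∈ Finset.range N, P (G j) ≤ ∫⁻ ω, T ω ∂P := by
  have hpt : ∀ ω, ∑ j ∈ Finset.range N, (G j).indicator 1 ω ≤ T ω := by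
    intro ω
    induction N with
    | zero => simp
    | succ N ih =>
      rw [Finset.sum_range_succ]
      by_cases hω : ω ∈ G N
      · calc ∑ j ∈ Finset.range N, (G j).indicator 1 ω + (G N).indicator 1 ω
            ≤ ∑ j ∈ Finset.range N, (1 : ℝ≥0∞) + 1 := by
              gcongr with j <;> exact indicator_le_self' (fun _ _ => zero_le_one) ω
          _ ≤ T ω := by simpa using hT N ω hω
      · simpa [hω] using ih
  calc ∑ j ∈ Finset.range N, P (G j)
      = ∫⁻ ω, ∑ j ∈ Finset.range N, (G j).indicator 1 ω ∂P := by
        rw [lintegral_finsetSum _ fun j _ => measurable_one.indicator (hGm j)]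
        simp only [lintegral_indicator_one (hGm _)]
    _ ≤ ∫⁻ ω, T ω ∂P := lintegral_mono hpt

theorem le_lintegral_of_mul_measure_compl_le_sum [IsProbabilityMeasure P] {G : ℕ → Set Ω}
    (hG : Antitone G) (hGm : ∀ j, MeasurableSet (G j)) {T : Ω → ℝ≥0∞}
    (hT : ∀ j, ∀ ω ∈ G j, (j + 1 : ℝ≥0∞) ≤ T ω) {B : ℝ≥0∞}
    (hB : ∀ N, B * P (G N)ᶜ ≤ ∑ j ∈ Finset.range N, P (G j)) :
    B ≤ ∫⁻ ω, T ω ∂P := by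
  rcases eq_or_ne (P (⋂ j, G j)) 0 with h | h
  · have hU : P (⋃ j, (G j)ᶜ) = 1 := by
      rwa [← compl_iInter, prob_compl_eq_one_iff (MeasurableSet.iInter hGm)]
    calc B = ⨆ N, B * P (G N)ᶜ := by
          rw [← ENNReal.mul_iSup, ← Monotone.measure_iUnion fun i j hij =>
            compl_subset_compl.2 (hG hij), hU, mul_one]
      _ ≤ ∫⁻ ω, T ω ∂P := iSup_le fun N => (hB N).trans (sum_measure_le_lintegral hGm hT N)
  · have htop : ∀ ω ∈ ⋂ j, G j, T ω = ∞ := fun ω hω =>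
      ENNReal.eq_top_of_forall_nnreal_le fun r => by
        obtain ⟨j, hj⟩ := exists_nat_gt r
        calc (r : ℝ≥0∞) ≤ j := by exact_mod_cast hj.le
          _ ≤ j + 1 := le_self_add
          _ ≤ T ω := hT j ω (mem_iInter.1 hω j)
    calc B ≤ ∫⁻ ω in ⋂ j, G j, T ω ∂P := by
          rw [setLIntegral_congr_fun (MeasurableSet.iInter hGm) htop, setLIntegral_const,
            ENNReal.top_mul h]
          exact le_top
      _ ≤ ∫⁻ ω, T ω ∂P := setLIntegral_le_lintegral _ _

noncomputable def shiryaevRoberts (L : ℕ → Ω → ℝ) : ℕ → Ω → ℝ≥0∞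
  | 0 => 0
  | j + 1 => fun ω => (shiryaevRoberts L j ω + 1) * ENNReal.ofReal (L (j + 1) ω)

/-- The event `{τ > j}` for the alarm time `τ = inf {i ≥ 1 | B ≤ M i}`. -/
def noAlarm (M : ℕ → Ω → ℝ) (B : ℝ) (j : ℕ) : Set Ω := {ω | ∀ i < j, M (i + 1) ω < B}

section CuSum

variable {ℱ : Filtration ℕ m0} {L M : ℕ → Ω → ℝ}

theorem measurable_shiryaevRoberts (hL : ∀ j, Measurable[ℱ (j + 1)] (L (j + 1))) (j : ℕ) :
    Measurable[ℱ j] (shiryaevRoberts L j) := by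
  induction j with
  | zero => exact measurable_const
  | succ j ih =>
    exact ((ih.mono (ℱ.mono j.le_succ) le_rfl).add_const 1).mul (hL j).ennreal_ofReal

theorem setLIntegral_shiryaevRoberts_succ [IsFiniteMeasure P] {j : ℕ}
    (hR : Measurable[ℱ j] (shiryaevRoberts L j)) (hL0 : 0 ≤ᵐ[P] L (j + 1))
    (hLi : Integrable (L (j + 1)) P) (hLc : P[L (j + 1) | ℱ j] =ᵐ[P] fun _ => 1)
    {s : Set Ω} (hs : MeasurableSet[ℱ j] s) :
    ∫⁻ ω in s, shiryaevRoberts L (j + 1) ω ∂P = ∫⁻ ω in s, shiryaevRoberts L j ω ∂P + P s := by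
  have hpull := lintegral_mul_ofReal_eq_of_condExp_eq_one (ℱ.le j) hL0 hLi hLc
    ((hR.add_const 1).indicator hs)
  calc ∫⁻ ω in s, shiryaevRoberts L (j + 1) ω ∂P
      = ∫⁻ ω, s.indicator (fun ω => shiryaevRoberts L j ω + 1) ω
          * ENNReal.ofReal (L (j + 1) ω) ∂P := by
        rw [← lintegral_indicator (ℱ.le j s hs)]
        exact lintegral_congr fun ω => indicator_mul_left _ _ _
    _ = ∫⁻ ω in s, (shiryaevRoberts L j ω + 1) ∂P := by
        rw [hpull, lintegral_indicator (ℱ.le j s hs)]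
    _ = ∫⁻ ω in s, shiryaevRoberts L j ω ∂P + P s := by
        rw [lintegral_add_right _ measurable_const, setLIntegral_const, one_mul]

theorem ofReal_le_shiryaevRoberts (hM0 : ∀ ω, M 0 ω = 1)
    (hMrec : ∀ j ω, M (j + 1) ω = max (M j ω) 1 * L (j + 1) ω) (j : ℕ) (ω : Ω) :
    ENNReal.ofReal (M (j + 1) ω) ≤ shiryaevRoberts L (j + 1) ω := by
  have hstep : ∀ j, ENNReal.ofReal (max (M j ω) 1) ≤ shiryaevRoberts L j ω + 1 →
      ENNReal.ofReal (M (j + 1) ω) ≤ shiryaevRoberts L (j + 1) ω := fun j h => by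
    rw [hMrec, ENNReal.ofReal_mul (by positivity)]
    exact mul_le_mul_left h _
  refine hstep j ?_
  induction j with
  | zero => simp [hM0, shiryaevRoberts]
  | succ j ih =>
    rw [ENNReal.ofReal_max, ENNReal.ofReal_one]
    exact max_le ((hstep j ih).trans le_self_add) le_add_self

theorem measurable_of_max_one_mul (hM0 : Measurable[ℱ 0] (M 0))
    (hMrec : ∀ j ω, M (j + 1) ω = max (M j ω) 1 * L (j + 1) ω)
    (hL : ∀ j, Measurable[ℱ (j + 1)] (L (j + 1))) (j : ℕ) : Measurable[ℱ j] (M j) := by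
  induction j with
  | zero => exact hM0
  | succ j ih =>
    rw [show M (j + 1) = fun ω => max (M j ω) 1 * L (j + 1) ω from funext (hMrec j)]
    exact ((ih.mono (ℱ.mono j.le_succ) le_rfl).max measurable_const).mul (hL j)

variable {B : ℝ}

theorem noAlarm_zero : noAlarm M B 0 = univ := by simp [noAlarm]

theorem antitone_noAlarm : Antitone (noAlarm M B) :=
  fun _ _ hjk _ hω i hi => hω i (hi.trans_le hjk)

theorem measurableSet_noAlarm (hM : ∀ j, Measurable[ℱ j] (M j)) (j : ℕ) :
    MeasurableSet[ℱ j] (noAlarm M B j) := by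
  simp only [noAlarm, ofPred_forall]
  exact MeasurableSet.iInter fun i => MeasurableSet.iInter fun hi =>
    measurableSet_lt ((hM (i + 1)).mono (ℱ.mono hi) le_rfl) measurable_const

theorem le_of_mem_noAlarm_sdiff {j : ℕ} {ω : Ω}
    (hω : ω ∈ noAlarm M B j \ noAlarm M B (j + 1)) : B ≤ M (j + 1) ω := by
  obtain ⟨hj, hj1⟩ := hω
  by_contra! h
  exact hj1 fun i hi => (Nat.lt_succ_iff_lt_or_eq.1 hi).elim (hj i) fun hij => hij ▸ h

theorem ofReal_le_lintegral_of_noAlarm [IsProbabilityMeasure P]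
    (hL0 : ∀ j ω, 0 ≤ L (j + 1) ω) (hLi : ∀ j, Integrable (L (j + 1)) P)
    (hLm : ∀ j, Measurable[ℱ (j + 1)] (L (j + 1)))
    (hLc : ∀ j, P[L (j + 1) | ℱ j] =ᵐ[P] fun _ => 1) (hM0 : ∀ ω, M 0 ω = 1)
    (hMrec : ∀ j ω, M (j + 1) ω = max (M j ω) 1 * L (j + 1) ω) {T : Ω → ℝ≥0∞}
    (hT : ∀ j, ∀ ω ∈ noAlarm M B j, (j + 1 : ℝ≥0∞) ≤ T ω) :
    ENNReal.ofReal B ≤ ∫⁻ ω, T ω ∂P := by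
  have hM : ∀ j, Measurable[ℱ j] (M j) :=
    measurable_of_max_one_mul (by simp only [funext hM0]; exact measurable_const) hMrec hLm
  have hG : ∀ j, MeasurableSet (noAlarm M B j) := fun j => ℱ.le j _ (measurableSet_noAlarm hM j)
  refine le_lintegral_of_mul_measure_compl_le_sum antitone_noAlarm hG hT fun N =>
    le_add_self.trans (setLIntegral_add_mul_measure_compl_le_sum (R := shiryaevRoberts L)
      antitone_noAlarm hG noAlarm_zero rfl (fun j => ?_) (fun j ω hω => ?_) N)
  · exact setLIntegral_shiryaevRoberts_succ (measurable_shiryaevRoberts hLm j)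
      (ae_of_all _ (hL0 j)) (hLi j) (hLc j) (measurableSet_noAlarm hM j)
  · exact (ENNReal.ofReal_le_ofReal (le_of_mem_noAlarm_sdiff hω)).trans
      (ofReal_le_shiryaevRoberts hM0 hMrec j ω)

end CuSum

end

theorem cusum_mean_time_to_false_alarm_general
    {Ω : Type*} [m0 : MeasurableSpace Ω] (P : Measure Ω) [IsProbabilityMeasure P]
    (w : ℕ) (ℱ : Filtration ℕ m0)
    (L : ℕ → Ω → ℝ)
    (hLpos : ∀ n, w < n → ∀ ω, 0 ≤ L n ω)
    (hLint : ∀ n, w < n → Integrable (L n) P)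
    (hLmeas : ∀ n, w < n → StronglyMeasurable[ℱ n] (L n))
    (hLcond : ∀ n, w < n → P[L n | ℱ (n - 1)] =ᵐ[P] (fun _ => (1 : ℝ)))
    (M : ℕ → Ω → ℝ)
    (hMw : ∀ ω, M w ω = 1)
    (hMrec : ∀ n, w < n → ∀ ω, M n ω = max (M (n - 1) ω) 1 * L n ω)
    (b : ℝ)
    (T : Ω → ℝ≥0∞)
    (hT : ∀ ω, T ω = sInf {t : ℝ≥0∞ | ∃ n : ℕ, t = n ∧ w < n ∧ Real.exp b ≤ M n ω}) :
    ENNReal.ofReal (Real.exp b) ≤ ∫⁻ ω, T ω ∂P := by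
  let ℱw : Filtration ℕ m0 :=
    ⟨fun j => ℱ (w + j), fun _ _ hij => ℱ.mono (by omega), fun _ => ℱ.le _⟩
  have hLm : ∀ j, Measurable[ℱw (j + 1)] (L (w + (j + 1))) :=
    fun j => (hLmeas _ (by omega)).measurable
  have hMrecw : ∀ j ω, M (w + (j + 1)) ω = max (M (w + j) ω) 1 * L (w + (j + 1)) ω :=
    fun j => hMrec _ (by omega)
  have hTnoAlarm : ∀ j, ∀ ω ∈ noAlarm (fun j => M (w + j)) (Real.exp b) j,
      (j + 1 : ℝ≥0∞) ≤ T ω := by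
    intro j ω hω
    rw [hT ω]
    refine le_sInf ?_
    rintro _ ⟨n, rfl, hwn, hn⟩
    obtain ⟨i, rfl⟩ := Nat.exists_eq_add_of_lt hwn
    have hji : j ≤ i := by
      by_contra! hij
      exact (hω i hij).not_ge hn
    exact_mod_cast (by omega : j + 1 ≤ w + i + 1)
  exact ofReal_le_lintegral_of_noAlarm (ℱ := ℱw) (L := fun j => L (w + j))
    (fun j => hLpos _ (by omega)) (fun j => hLint _ (by omega)) hLm
    (fun j => hLcond (w + (j + 1)) (by omega)) hMw hMrecw hTnoAlarm

/-- For the exponentiated CuSum statistic `M_w = 1`, `M_n = max(M_{n-1}, 1) L_n` for `n > w`,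
driven by nonnegative integrable likelihood ratios with `E[L_n | F_{n-1}] = 1` a.s., the
stopping time `T_b = inf {n > w : M_n ≥ e^b}` satisfies `E[T_b] ≥ e^b`
(the expectation being allowed to be infinite). -/
theorem cusum_mean_time_to_false_alarm
    {Ω : Type*} [m0 : MeasurableSpace Ω] (P : Measure Ω) [IsProbabilityMeasure P]
    (w : ℕ) (ℱ : Filtration ℕ m0)
    (L : ℕ → Ω → ℝ)
    (hLpos : ∀ n, w < n → ∀ ω, 0 ≤ L n ω)
    (hLint : ∀ n, w < n → Integrable (L n) P)
    (hLmeas : ∀ n, w < n → StronglyMeasurable[ℱ n] (L n))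
    (hLcond : ∀ n, w < n → P[L n | ℱ (n - 1)] =ᵐ[P] (fun _ => (1 : ℝ)))
    (M : ℕ → Ω → ℝ)
    (hMw : ∀ ω, M w ω = 1)
    (hMrec : ∀ n, w < n → ∀ ω, M n ω = max (M (n - 1) ω) 1 * L n ω)
    (b : ℝ) (hb : 0 < b)
    (T : Ω → ℝ≥0∞)
    (hT : ∀ ω, T ω = sInf {t : ℝ≥0∞ | ∃ n : ℕ, t = n ∧ w < n ∧ Real.exp b ≤ M n ω}) :
    ENNReal.ofReal (Real.exp b) ≤ ∫⁻ ω, T ω ∂P :=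
  cusum_mean_time_to_false_alarm_general (m0 := m0) P w ℱ L hLpos hLint hLmeas hLcond M hMw hMrec b
    T hT
end

section
/- Let σ be a {G_n}-stopping time with E[σ] < ∞. Then the delayed Wald identity holds: E[ Σ_{n=w+1}^{σ+w} Y_n ] = Σ_{n=w+1}^{∞} E[ E[Y_n | G_{n−w−1}] · 1{σ ≥ n − w} ], where the series on the right converges absolutely. -/
/-!
With `A k = {k < σ} ∈ 𝒢 k`, the random sum is `∑ₖ 1_{A k} Y_{w+1+k}`. Since `2|y| ≤ y² + 1` and
`A k ∈ 𝒢 (w + k)`, the conditional variance bound gives `E[|Y_{w+1+k}|; A k] ≤ (v + 1)/2 · P(A k)`,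
and `∑ₖ P(A k) = E[σ] < ∞`. So the series converges absolutely, expectation and sum may be
interchanged, and `E[Y_{w+1+k}; A k] = E[E[Y_{w+1+k} | 𝒢 k]; A k]` because `A k ∈ 𝒢 k`.
-/

open MeasureTheory Filter Set
open scoped ENNReal

section ConditionalBounds

variable {Ω : Type*} {m m0 : MeasurableSpace Ω} {μ : Measure Ω} [IsFiniteMeasure μ]

theorem setIntegral_le_of_condExp_le (hm : m ≤ m0) {f : Ω → ℝ} (hf : Integrable f μ) {v : ℝ}
    (hfv : μ[f | m] ≤ᵐ[μ] fun _ => v) {s : Set Ω} (hs : MeasurableSet[m] s) :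
    ∫ ω in s, f ω ∂μ ≤ v * μ.real s := calc
  ∫ ω in s, f ω ∂μ = ∫ ω in s, (μ[f | m]) ω ∂μ := (setIntegral_condExp hm hf hs).symm
  _ ≤ ∫ _ in s, v ∂μ :=
    setIntegral_mono_ae integrable_condExp.integrableOn (integrable_const v).integrableOn hfv
  _ = v * μ.real s := by rw [setIntegral_const, smul_eq_mul, mul_comm]

theorem setIntegral_abs_le_of_memLp_two {Y : Ω → ℝ} (hY : MemLp Y 2 μ) (s : Set Ω) :
    ∫ ω in s, |Y ω| ∂μ ≤ (∫ ω in s, Y ω ^ 2 ∂μ + μ.real s) / 2 := by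
  have hY2 : Integrable (fun ω => Y ω ^ 2) μ := hY.integrable_sq
  calc ∫ ω in s, |Y ω| ∂μ ≤ ∫ ω in s, (Y ω ^ 2 + 1) / 2 ∂μ := by
        refine setIntegral_mono (hY.integrable one_le_two).abs.integrableOn
          ((hY2.add (integrable_const 1)).div_const 2).integrableOn fun ω => ?_
        nlinarith [sq_nonneg (|Y ω| - 1), sq_abs (Y ω)]
    _ = (∫ ω in s, Y ω ^ 2 ∂μ + μ.real s) / 2 := by
        rw [integral_div, integral_add hY2.integrableOn (integrable_const 1).integrableOn,
          setIntegral_const, smul_eq_mul, mul_one]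

theorem setIntegral_abs_le_of_condExp_sq_le (hm : m ≤ m0) {Y : Ω → ℝ} (hY : MemLp Y 2 μ)
    {v : ℝ} (hv : μ[fun ω => Y ω ^ 2 | m] ≤ᵐ[μ] fun _ => v) {s : Set Ω}
    (hs : MeasurableSet[m] s) :
    ∫ ω in s, |Y ω| ∂μ ≤ (v + 1) / 2 * μ.real s := by
  have := setIntegral_le_of_condExp_le hm hY.integrable_sq hv hs
  linarith [setIntegral_abs_le_of_memLp_two hY s]

theorem integral_condExp_mul_indicator_one (hm : m ≤ m0) {f : Ω → ℝ} (hf : Integrable f μ)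
    {s : Set Ω} (hs : MeasurableSet[m] s) :
    ∫ ω, (μ[f | m]) ω * s.indicator (fun _ => (1 : ℝ)) ω ∂μ = ∫ ω in s, f ω ∂μ := by
  simp only [← Set.indicator_mul_right, mul_one]
  rw [integral_indicator (hm s hs), setIntegral_condExp hm hf hs]

end ConditionalBounds

section TailSums

variable {Ω : Type*} [MeasurableSpace Ω] {μ : Measure Ω}

theorem lintegral_natCast_eq_tsum_measure_lt {σ : Ω → ℕ} (hσ : Measurable σ) :
    ∫⁻ ω, (σ ω : ℝ≥0∞) ∂μ = ∑' k : ℕ, μ {ω | k < σ ω} := by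
  have hset (k : ℕ) : MeasurableSet {ω | k < σ ω} := hσ measurableSet_Ioi
  have hcount (n : ℕ) : (n : ℝ≥0∞) = ∑' k : ℕ, if k < n then 1 else 0 := by
    rw [tsum_eq_sum (s := Finset.range n) (by simp),
      Finset.sum_ite_of_true fun k hk => Finset.mem_range.mp hk]
    simp
  simp_rw [← lintegral_indicator_one (hset _), hcount]
  rw [← lintegral_tsum fun k => (measurable_one.indicator (hset k)).aemeasurable]
  simp [Set.indicator_apply]

theorem summable_measureReal_lt_of_integrable {σ : Ω → ℕ} (hσ : Measurable σ)
    (hint : Integrable (fun ω => (σ ω : ℝ)) μ) :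
    Summable fun k : ℕ => μ.real {ω | k < σ ω} := by
  refine ENNReal.summable_toReal ?_
  rw [← lintegral_natCast_eq_tsum_measure_lt hσ]
  simpa using hint.hasFiniteIntegral.ne

theorem integral_tsum_indicator_eq_tsum_setIntegral {Z : ℕ → Ω → ℝ} {A : ℕ → Set Ω}
    (hZ : ∀ k, Integrable (Z k) μ) (hA : ∀ k, MeasurableSet (A k))
    (hsum : Summable fun k => ∫ ω in A k, |Z k ω| ∂μ) :
    ∫ ω, ∑' k, (A k).indicator (Z k) ω ∂μ = ∑' k, ∫ ω in A k, Z k ω ∂μ := by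
  have hnorm (k : ℕ) : ∫ ω, ‖(A k).indicator (Z k) ω‖ ∂μ = ∫ ω in A k, |Z k ω| ∂μ := by
    simp_rw [norm_indicator_eq_indicator_norm, Real.norm_eq_abs]
    exact integral_indicator (hA k)
  rw [← integral_tsum_of_summable_integral_norm (fun k => (hZ k).indicator (hA k))
    (by simpa only [hnorm] using hsum)]
  exact tsum_congr fun k => integral_indicator (hA k)

end TailSums

theorem sum_Ioc_add_eq_tsum_ite {M : Type*} [AddCommMonoid M] [TopologicalSpace M]
    (y : ℕ → M) (w s : ℕ) :
    ∑ n ∈ Finset.Ioc w (s + w), y n = ∑' k : ℕ, if k < s then y (w + 1 + k) else 0 := by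
  rw [tsum_eq_sum (s := Finset.range s) (by simp_all),
    Finset.sum_ite_of_true fun k hk => Finset.mem_range.mp hk,
    ← Finset.Ico_add_one_add_one_eq_Ioc, Finset.sum_Ico_eq_sum_range]
  simp

theorem delayed_wald_identity_general
    {Ω : Type*} [m0 : MeasurableSpace Ω] (P : Measure Ω) [IsProbabilityMeasure P]
    (𝒢 : Filtration ℕ m0) (w : ℕ)
    (Y : ℕ → Ω → ℝ)
    (hY2 : ∀ n, w < n → MemLp (Y n) 2 P)
    (v : ℝ)
    (hvar : ∀ n, w < n → P[(fun ω => (Y n ω) ^ 2) | 𝒢 (n - 1)] ≤ᵐ[P] (fun _ => v))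
    (σ : Ω → ℕ) (hσ : IsStoppingTime 𝒢 (fun ω => (σ ω : WithTop ℕ)))
    (hσint : Integrable (fun ω => (σ ω : ℝ)) P) :
    Summable (fun k : ℕ =>
      |∫ ω, (P[Y (w + 1 + k) | 𝒢 k]) ω *
        Set.indicator {ω' | k + 1 ≤ σ ω'} (fun _ => (1 : ℝ)) ω ∂P|) ∧
    ∫ ω, (∑ n ∈ Finset.Ioc w (σ ω + w), Y n ω) ∂P =
      ∑' k : ℕ, ∫ ω, (P[Y (w + 1 + k) | 𝒢 k]) ω *
        Set.indicator {ω' | k + 1 ≤ σ ω'} (fun _ => (1 : ℝ)) ω ∂P := by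
  set A : ℕ → Set Ω := fun k => {ω | k < σ ω}
  have hA (k : ℕ) : MeasurableSet[𝒢 k] (A k) := by
    convert (hσ k).compl using 1
    ext ω
    simp [A]
  have hσm : Measurable σ := measurable_to_countable' fun n => 𝒢.le n _ <| by
    convert hσ.measurableSet_eq n using 1
    ext ω
    simp
  have hY (k : ℕ) : MemLp (Y (w + 1 + k)) 2 P := hY2 _ (by omega)
  have hterm (k : ℕ) : ∫ ω, (P[Y (w + 1 + k) | 𝒢 k]) ω *
      Set.indicator {ω' | k + 1 ≤ σ ω'} (fun _ => (1 : ℝ)) ω ∂P =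
      ∫ ω in A k, Y (w + 1 + k) ω ∂P :=
    integral_condExp_mul_indicator_one (𝒢.le k) ((hY k).integrable one_le_two) (hA k)
  have hsum : Summable fun k => ∫ ω in A k, |Y (w + 1 + k) ω| ∂P :=
    .of_nonneg_of_le (fun _ => integral_nonneg fun _ => abs_nonneg _)
      (fun k => setIntegral_abs_le_of_condExp_sq_le (𝒢.le _) (hY k) (hvar _ (by omega))
        (𝒢.mono (by omega) _ (hA k)))
      ((summable_measureReal_lt_of_integrable hσm hσint).mul_left _)
  refine ⟨hsum.of_nonneg_of_le (fun _ => abs_nonneg _)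
    fun k => (hterm k).symm ▸ abs_integral_le_integral_abs, ?_⟩
  simp_rw [hterm, sum_Ioc_add_eq_tsum_ite]
  rw [← integral_tsum_indicator_eq_tsum_setIntegral
    (fun k => (hY k).integrable one_le_two) (fun k => 𝒢.le k _ (hA k)) hsum]
  simp only [Set.indicator_apply, A, Set.mem_ofPred_eq]

/-- Delayed Wald identity: if `σ` is a stopping time with `E[σ] < ∞`, then
`E[ Σ_{n=w+1}^{σ+w} Y_n ] = Σ_{n=w+1}^{∞} E[ E[Y_n | G_{n-w-1}] · 1{σ ≥ n-w} ]`,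
where the series converges absolutely.  (The series is written below via the
reindexing `n = w + 1 + k`, so that `n - w - 1 = k` and `{σ ≥ n - w} = {σ ≥ k + 1}`.) -/
theorem delayed_wald_identity
    {Ω : Type*} [m0 : MeasurableSpace Ω] (P : Measure Ω) [IsProbabilityMeasure P]
    (𝒢 : Filtration ℕ m0) (w : ℕ)
    (Y : ℕ → Ω → ℝ)
    (hY2 : ∀ n, w < n → MemLp (Y n) 2 P)
    (hadp : ∀ n, w < n → StronglyMeasurable[𝒢 n] (Y n))
    (v : ℝ) (hv : 0 < v)
    (hvar : ∀ n, w < n → P[(fun ω => (Y n ω) ^ 2) | 𝒢 (n - 1)] ≤ᵐ[P] (fun _ => v))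
    (σ : Ω → ℕ) (hσ : IsStoppingTime 𝒢 (fun ω => (σ ω : WithTop ℕ)))
    (hσint : Integrable (fun ω => (σ ω : ℝ)) P) :
    Summable (fun k : ℕ =>
      |∫ ω, (P[Y (w + 1 + k) | 𝒢 k]) ω *
        Set.indicator {ω' | k + 1 ≤ σ ω'} (fun _ => (1 : ℝ)) ω ∂P|) ∧
    ∫ ω, (∑ n ∈ Finset.Ioc w (σ ω + w), Y n ω) ∂P =
      ∑' k : ℕ, ∫ ω, (P[Y (w + 1 + k) | 𝒢 k]) ω *
        Set.indicator {ω' | k + 1 ≤ σ ω'} (fun _ => (1 : ℝ)) ω ∂P :=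
  delayed_wald_identity_general (m0 := m0) P 𝒢 w Y hY2 v hvar σ hσ hσint
end

section
/- Lorden's pathwise overshoot inequality holds: 0 ≤ 2 ∫_0^b R_c dc ≤ Σ_{n=w+1}^{τ_b} Y_n² − R_b². -/
/-!
If `c ∈ (0, b]` is first passed at time `n`, then `S_{n-1} < c ≤ min S_n b`, so the overshoot
`R_c = S_n - c` is the value at `c` of the nonnegative function `S_n - c` cut down to the interval
`(S_{n-1}, min S_n b]`. Hence `R_c` is dominated by the sum of these functions over
`w < n ≤ τ_b`. Twice the integral of the `n`-th one is at most `(S_n - S_{n-1})² = Y_n²`, and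
for `n = τ_b`, where the interval is `(S_{n-1}, b]`, it is exactly `Y_n² - R_b²`.
-/

open MeasureTheory Set

theorem integral_Ioc_const_sub {a u : ℝ} (s : ℝ) (hau : a ≤ u) :
    ∫ c in Ioc a u, (s - c) = ((s - a) ^ 2 - (s - u) ^ 2) / 2 := by
  rw [← intervalIntegral.integral_of_le hau,
    intervalIntegral.integral_sub intervalIntegrable_const intervalIntegral.intervalIntegrable_id, intervalIntegral.integral_const, integral_id]
  simp only [smul_eq_mul]
  ring

theorem two_mul_integral_Ioc_const_sub_le_sq (a s : ℝ) :
    2 * ∫ c in Ioc a s, (s - c) ≤ (s - a) ^ 2 := by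
  rcases le_or_gt a s with has | hsa
  · rw [integral_Ioc_const_sub s has]
    nlinarith
  · rw [Ioc_eq_empty (not_lt.mpr hsa.le), Measure.restrict_empty, integral_zero_measure, mul_zero]
    positivity

def IsFirstPassage (S : ℕ → ℝ) (w : ℕ) (c : ℝ) (n : ℕ) : Prop :=
  w < n ∧ c ≤ S n ∧ ∀ j, w < j → j < n → S j < c

namespace IsFirstPassage

variable {S : ℕ → ℝ} {w : ℕ} {c c' : ℝ} {n n' : ℕ}

theorem le_of_le (h : IsFirstPassage S w c n) (h' : IsFirstPassage S w c' n') (hcc' : c ≤ c') :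
    n ≤ n' := by
  by_contra! hlt
  linarith [h.2.2 n' h'.1 hlt, h'.2.1]

theorem pred_lt (hSw : S w = 0) (hc : 0 < c) (h : IsFirstPassage S w c n) : S (n - 1) < c := by
  rcases (Nat.le_sub_one_of_lt h.1).eq_or_lt with hw | hw
  · rwa [← hw, hSw]
  · exact h.2.2 (n - 1) hw (Nat.sub_one_lt_of_lt h.1)

end IsFirstPassage

noncomputable def ladderPiece (S : ℕ → ℝ) (b : ℝ) (n : ℕ) : ℝ → ℝ :=
  (Ioc (S (n - 1)) (min (S n) b)).indicator fun c => S n - c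

section ladder

variable {S : ℕ → ℝ} {w : ℕ} {b : ℝ}

theorem ladderPiece_nonneg (n : ℕ) (c : ℝ) : 0 ≤ ladderPiece S b n c := by
  unfold ladderPiece
  refine indicator_nonneg (fun c hc => ?_) c
  linarith [hc.2.trans (min_le_left _ _)]

theorem integrable_ladderPiece (n : ℕ) : Integrable (ladderPiece S b n) := by
  unfold ladderPiece
  rw [integrable_indicator_iff measurableSet_Ioc]
  exact (continuous_const.sub continuous_id).integrableOn_Ioc

theorem overshoot_le_sum_ladderPiece (hSw : S w = 0) {N n : ℕ} (hN : IsFirstPassage S w b N)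
    {c : ℝ} (hc : c ∈ Ioc 0 b) (hn : IsFirstPassage S w c n) :
    S n - c ≤ ∑ k ∈ Finset.Ioc w N, ladderPiece S b k c := by
  have hnN : n ∈ Finset.Ioc w N := Finset.mem_Ioc.mpr ⟨hn.1, hn.le_of_le hN hc.2⟩
  have hcn : c ∈ Ioc (S (n - 1)) (min (S n) b) := ⟨hn.pred_lt hSw hc.1, le_min hn.2.1 hc.2⟩
  calc S n - c = ladderPiece S b n c := (indicator_of_mem hcn _).symm
    _ ≤ _ := Finset.single_le_sum (fun k _ => ladderPiece_nonneg k c) hnN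

theorem two_mul_integral_ladderPiece_le (hSw : S w = 0) (hb : 0 < b) {N n : ℕ}
    (hN : IsFirstPassage S w b N) (hn : n ∈ Finset.Ioc w N) :
    2 * ∫ c, ladderPiece S b n c ≤
      (S n - S (n - 1)) ^ 2 - if n = N then (S N - b) ^ 2 else 0 := by
  rw [ladderPiece, integral_indicator measurableSet_Ioc]
  obtain ⟨hwn, hnN⟩ := Finset.mem_Ioc.mp hn
  rcases hnN.lt_or_eq with hlt | rfl
  · have hSn : S n < b := hN.2.2 n hwn hlt
    rw [min_eq_left hSn.le, if_neg hlt.ne, sub_zero]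
    exact two_mul_integral_Ioc_const_sub_le_sq _ _
  · rw [min_eq_right hN.2.1, if_pos rfl,
      integral_Ioc_const_sub _ (hN.pred_lt hSw hb).le]
    linarith

theorem integral_overshoot_le_sum (hSw : S w = 0) {N : ℕ} (hN : IsFirstPassage S w b N)
    {τ : ℝ → ℕ} (hτ : ∀ c ∈ Ioc 0 b, IsFirstPassage S w c (τ c)) :
    ∫ c in Ioc 0 b, (S (τ c) - c) ≤ ∑ n ∈ Finset.Ioc w N, ∫ c, ladderPiece S b n c := by
  have hsum : Integrable fun c => ∑ n ∈ Finset.Ioc w N, ladderPiece S b n c :=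
    integrable_finsetSum _ fun n _ => integrable_ladderPiece n
  calc ∫ c in Ioc 0 b, (S (τ c) - c)
      ≤ ∫ c in Ioc 0 b, ∑ n ∈ Finset.Ioc w N, ladderPiece S b n c := by
        -- `τ` need not be measurable: only the dominating function has to be integrable.
        refine integral_mono_of_nonneg ?_ hsum.integrableOn ?_
        · filter_upwards [ae_restrict_mem measurableSet_Ioc] with c hc
          exact sub_nonneg.mpr (hτ c hc).2.1
        · filter_upwards [ae_restrict_mem measurableSet_Ioc] with c hc
          exact overshoot_le_sum_ladderPiece hSw hN hc (hτ c hc)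
    _ ≤ ∫ c, ∑ n ∈ Finset.Ioc w N, ladderPiece S b n c :=
        setIntegral_le_integral hsum (ae_of_all _ fun c => Finset.sum_nonneg fun n _ =>
          ladderPiece_nonneg n c)
    _ = _ := integral_finsetSum _ fun n _ => integrable_ladderPiece n

end ladder

/-- Lorden's pathwise overshoot inequality: with `S_w = 0`, `S_n = S_{n-1} + Y_n` for
`n > w`, hitting times `τ_c = inf {n > w : S_n ≥ c}` and overshoots `R_c = S_{τ_c} - c`,
if `τ_b < ∞` then `0 ≤ 2 ∫_0^b R_c dc ≤ Σ_{n=w+1}^{τ_b} Y_n² - R_b²`. -/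
theorem lorden_pathwise_overshoot_inequality
    (w : ℕ) (Y : ℕ → ℝ) (S : ℕ → ℝ)
    (hSw : S w = 0)
    (hSrec : ∀ n, w < n → S n = S (n - 1) + Y n)
    (b : ℝ) (hb : 0 < b)
    (τ : ℝ → ℕ)
    (hτ : ∀ c, 0 < c → c ≤ b →
      w < τ c ∧ c ≤ S (τ c) ∧ ∀ n, w < n → n < τ c → S n < c) :
    (0 ≤ 2 * ∫ c in Set.Ioc (0 : ℝ) b, (S (τ c) - c)) ∧
      2 * (∫ c in Set.Ioc (0 : ℝ) b, (S (τ c) - c)) ≤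
        (∑ n ∈ Finset.Ioc w (τ b), (Y n) ^ 2) - (S (τ b) - b) ^ 2 := by
  have hpass : ∀ c ∈ Ioc 0 b, IsFirstPassage S w c (τ c) := fun c hc => hτ c hc.1 hc.2
  have hpass_b := hpass b ⟨hb, le_rfl⟩
  have hY : ∀ n ∈ Finset.Ioc w (τ b), Y n = S n - S (n - 1) := fun n hn => by
    linarith [hSrec n (Finset.mem_Ioc.mp hn).1]
  refine ⟨mul_nonneg zero_le_two (setIntegral_nonneg measurableSet_Ioc fun c hc =>
    sub_nonneg.mpr (hpass c hc).2.1), ?_⟩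
  calc 2 * ∫ c in Ioc 0 b, (S (τ c) - c)
      ≤ ∑ n ∈ Finset.Ioc w (τ b), 2 * ∫ c, ladderPiece S b n c := by
        rw [← Finset.mul_sum]
        exact mul_le_mul_of_nonneg_left (integral_overshoot_le_sum hSw hpass_b hpass) zero_le_two
    _ ≤ ∑ n ∈ Finset.Ioc w (τ b),
          ((S n - S (n - 1)) ^ 2 - if n = τ b then (S (τ b) - b) ^ 2 else 0) :=
        Finset.sum_le_sum fun n hn => two_mul_integral_ladderPiece_le hSw hb hpass_b hn
    _ = _ := by
        rw [Finset.sum_sub_distrib, Finset.sum_ite_eq', if_pos (Finset.right_mem_Ioc.mpr hpass_b.1),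
          Finset.sum_congr rfl fun n hn => by rw [← hY n hn]]
end
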